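/- Let H be a real Hilbert space, m > 0, M > 0, ε₁, ε₂ ≥ 0, D₁, D₂ ≥ 0, and let f, g : H → ℝ be differentiable, m-strongly convex, with M-Lipschitz gradients, and w_f*, w_g* ∈ H with ∇f(w_f*) = 0, ∇g(w_g*) = 0. Let (Ω, F, P) be a probability space and U, V : Ω → H and G_U, G_V : Ω → H random variables (with all the quantities below integrable) such that E[f(U)] − f(w_f*) ≤ ε₁, E[g(V)] − g(w_g*) ≤ ε₂, E[‖∇f(U) − G_U‖] ≤ D₁, and E[‖∇g(V) − G_V‖] ≤ D₂. Then E[‖U − V‖ + (1/m)‖G_U‖ + (1/m)‖G_V‖] − ‖w_f* − w_g*‖ ≤ (2√2 · M / m^{3/2})(√ε₁ + √ε₂) + (1/m)(D₁ + D₂). -/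

import Mathlib

open MeasureTheory

/-!
Strong convexity makes the gradient strongly monotone, so at a point `x` the distance to the
minimizer `w` is at most `‖∇f(x)‖ / m`, while the Lipschitz bound gives `‖∇f(x)‖ ≤ M ‖x - w‖`.
Hence `‖x - w‖ + ‖∇f(x)‖ / m ≤ (2M/m) ‖x - w‖`, and quadratic growth at `w` bounds `‖x - w‖` by
`√(2 (f x - f w) / m)`. Jensen's inequality for `√` turns the expected excess risk `ε` into
`E √(2 (f U - f w) / m) ≤ √(2ε/m)`. The triangle inequality through `w_f*` and `w_g*`, and
`‖G‖ ≤ ‖∇f‖ + ‖∇f - G‖`, assemble the two sides.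
-/

section StronglyConvex

variable {H : Type*} [NormedAddCommGroup H] [InnerProductSpace ℝ H]
  {m M : ℝ} {f : H → ℝ} {f' : H → H}

variable (m f f') in
def StronglyConvexWithGradient : Prop :=
  ∀ x y : H, f x + inner ℝ (f' x) (y - x) + m / 2 * ‖y - x‖ ^ 2 ≤ f y

theorem mul_sq_norm_sub_le_inner_grad_sub
    (hsc : StronglyConvexWithGradient m f f') (x y : H) :
    m * ‖x - y‖ ^ 2 ≤ inner ℝ (f' x - f' y) (x - y) := by
  have hxy := hsc x y
  have hyx := hsc y x
  rw [← neg_sub x y, inner_neg_right, norm_neg] at hxy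
  rw [inner_sub_left]
  linarith

theorem mul_norm_sub_le_norm_grad_sub
    (hsc : StronglyConvexWithGradient m f f') (x y : H) :
    m * ‖x - y‖ ≤ ‖f' x - f' y‖ := by
  rcases (norm_nonneg (x - y)).eq_or_lt with hzero | hpos
  · rw [← hzero, mul_zero]
    exact norm_nonneg _
  refine le_of_mul_le_mul_right ?_ hpos
  calc m * ‖x - y‖ * ‖x - y‖ = m * ‖x - y‖ ^ 2 := by ring
    _ ≤ inner ℝ (f' x - f' y) (x - y) := mul_sq_norm_sub_le_inner_grad_sub hsc x y
    _ ≤ ‖f' x - f' y‖ * ‖x - y‖ := real_inner_le_norm _ _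

variable {w : H}

theorem half_mul_sq_norm_sub_le_sub_of_grad_eq_zero
    (hsc : StronglyConvexWithGradient m f f')
    (hw : f' w = 0) (x : H) :
    m / 2 * ‖x - w‖ ^ 2 ≤ f x - f w := by
  have h := hsc w x
  rw [hw, inner_zero_left] at h
  linarith

theorem norm_sub_add_norm_grad_le_sqrt_excess (hm : 0 < m) (hM : 0 ≤ M)
    (hsc : StronglyConvexWithGradient m f f')
    (hlip : ∀ x y : H, ‖f' x - f' y‖ ≤ M * ‖x - y‖) (hw : f' w = 0) (x : H) :
    ‖x - w‖ + 1 / m * ‖f' x‖ ≤ 2 * M / m * √(2 / m * (f x - f w)) := by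
  have hdist : ‖x - w‖ ≤ 1 / m * ‖f' x‖ := by
    have h := mul_norm_sub_le_norm_grad_sub hsc x w
    rw [hw, sub_zero] at h
    rw [one_div_mul_eq_div, le_div_iff₀ hm]
    linarith
  have hgrad : ‖f' x‖ ≤ M * ‖x - w‖ := by simpa [hw] using hlip x w
  have hgrowth : ‖x - w‖ ≤ √(2 / m * (f x - f w)) := by
    refine Real.le_sqrt_of_sq_le ?_
    have h := half_mul_sq_norm_sub_le_sub_of_grad_eq_zero hsc hw x
    rw [div_mul_eq_mul_div, le_div_iff₀ hm]
    linarith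
  calc ‖x - w‖ + 1 / m * ‖f' x‖ ≤ 2 * (1 / m) * ‖f' x‖ := by linarith
    _ ≤ 2 * (1 / m) * (M * √(2 / m * (f x - f w))) := by gcongr; exact hgrad.trans (by gcongr)
    _ = 2 * M / m * √(2 / m * (f x - f w)) := by ring

variable (m M f f' w) in
noncomputable def overshootBound (x G : H) : ℝ :=
  2 * M / m * √(2 / m * (f x - f w)) + 1 / m * ‖f' x - G‖

theorem norm_sub_add_norm_le_overshootBound (hm : 0 < m) (hM : 0 ≤ M)
    (hsc : StronglyConvexWithGradient m f f')
    (hlip : ∀ x y : H, ‖f' x - f' y‖ ≤ M * ‖x - y‖) (hw : f' w = 0) (x G : H) :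
    ‖x - w‖ + 1 / m * ‖G‖ ≤ overshootBound m M f f' w x G := by
  have hx := norm_sub_add_norm_grad_le_sqrt_excess hm hM hsc hlip hw x
  have hG : 1 / m * ‖G‖ ≤ 1 / m * ‖f' x‖ + 1 / m * ‖f' x - G‖ := by
    rw [← mul_add]
    gcongr
    exact norm_le_norm_add_norm_sub _ _
  rw [overshootBound]
  linarith

end StronglyConvex

section Expectation

variable {Ω : Type*} [MeasurableSpace Ω] {P : Measure Ω}

theorem memLp_two_sqrt {X : Ω → ℝ} (hX : Integrable X P) (hX0 : 0 ≤ᵐ[P] X) :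
    MemLp (fun ω => √(X ω)) 2 P := by
  refine (memLp_two_iff_integrable_sq hX.1.aemeasurable.sqrt.aestronglyMeasurable).2 ?_
  refine hX.congr ?_
  filter_upwards [hX0] with ω hω using (Real.sq_sqrt hω).symm

theorem integral_sqrt_le_sqrt_integral [IsProbabilityMeasure P] {X : Ω → ℝ}
    (hX : Integrable X P) (hX0 : 0 ≤ᵐ[P] X) :
    ∫ ω, √(X ω) ∂P ≤ √(∫ ω, X ω ∂P) := by
  have hvar := ProbabilityTheory.variance_nonneg (fun ω => √(X ω)) P
  rw [ProbabilityTheory.variance_eq_sub (memLp_two_sqrt hX hX0)] at hvar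
  have hsq : ∫ ω, ((fun ω => √(X ω)) ^ 2) ω ∂P = ∫ ω, X ω ∂P := by
    refine integral_congr_ae ?_
    filter_upwards [hX0] with ω hω using Real.sq_sqrt hω
  exact Real.le_sqrt_of_sq_le (by linarith)

variable [IsProbabilityMeasure P] {H : Type*} [NormedAddCommGroup H] [InnerProductSpace ℝ H]
  {f : H → ℝ} {f' : H → H} {m M ε D : ℝ} {w : H} {U G : Ω → H}

theorem sqrt_excess_integrable_and_integral_le (hm : 0 ≤ m)
    (hsc : StronglyConvexWithGradient m f f')
    (hw : f' w = 0) (hfU : Integrable (fun ω => f (U ω)) P)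
    (hexcess : ∫ ω, f (U ω) ∂P - f w ≤ ε) :
    Integrable (fun ω => √(2 / m * (f (U ω) - f w))) P ∧
      ∫ ω, √(2 / m * (f (U ω) - f w)) ∂P ≤ √(2 / m) * √ε := by
  have hX : Integrable (fun ω => 2 / m * (f (U ω) - f w)) P :=
    (hfU.sub (integrable_const _)).const_mul _
  have hX0 : 0 ≤ᵐ[P] fun ω => 2 / m * (f (U ω) - f w) := ae_of_all _ fun ω => by
    have h := half_mul_sq_norm_sub_le_sub_of_grad_eq_zero hsc hw (U ω)
    have : 0 ≤ m / 2 * ‖U ω - w‖ ^ 2 := by positivity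
    exact mul_nonneg (by positivity) (by linarith)
  refine ⟨(memLp_two_sqrt hX hX0).integrable one_le_two, ?_⟩
  have hmean : ∫ ω, 2 / m * (f (U ω) - f w) ∂P = 2 / m * (∫ ω, f (U ω) ∂P - f w) := by
    rw [integral_const_mul, integral_sub hfU (integrable_const _), integral_const,
      probReal_univ, one_smul]
  calc ∫ ω, √(2 / m * (f (U ω) - f w)) ∂P ≤ √(2 / m * (∫ ω, f (U ω) ∂P - f w)) :=
        hmean ▸ integral_sqrt_le_sqrt_integral hX hX0
    _ ≤ √(2 / m * ε) := by gcongr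
    _ = √(2 / m) * √ε := Real.sqrt_mul (by positivity) ε

theorem two_mul_div_mul_sqrt_two_div (hm : 0 < m) :
    2 * M / m * √(2 / m) = 2 * √2 * M / m ^ ((3 : ℝ) / 2) := by
  have hpow : m ^ ((3 : ℝ) / 2) = m * √m := by
    rw [show (3 : ℝ) / 2 = 1 + 1 / 2 by norm_num, Real.rpow_add hm, Real.rpow_one,
      Real.sqrt_eq_rpow]
  have hsqrt : 0 < √m := Real.sqrt_pos.mpr hm
  rw [hpow, Real.sqrt_div' _ hm.le]
  field_simp

theorem overshootBound_integrable_and_integral_le (hm : 0 < m) (hM : 0 ≤ M)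
    (hsc : StronglyConvexWithGradient m f f')
    (hw : f' w = 0) (hfU : Integrable (fun ω => f (U ω)) P)
    (hdiff : Integrable (fun ω => ‖f' (U ω) - G ω‖) P)
    (hexcess : ∫ ω, f (U ω) ∂P - f w ≤ ε) (happrox : ∫ ω, ‖f' (U ω) - G ω‖ ∂P ≤ D) :
    Integrable (fun ω => overshootBound m M f f' w (U ω) (G ω)) P ∧
      ∫ ω, overshootBound m M f f' w (U ω) (G ω) ∂P ≤
        2 * √2 * M / m ^ ((3 : ℝ) / 2) * √ε + 1 / m * D := by
  obtain ⟨hint, hle⟩ := sqrt_excess_integrable_and_integral_le hm.le hsc hw hfU hexcess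
  refine ⟨(hint.const_mul _).add (hdiff.const_mul _), ?_⟩
  simp only [overshootBound]
  rw [integral_add (hint.const_mul _) (hdiff.const_mul _), integral_const_mul,
    integral_const_mul, ← two_mul_div_mul_sqrt_two_div hm, mul_assoc]
  gcongr

end Expectation

theorem expected_direct_estimate_overshoot_general
    {H : Type*} [NormedAddCommGroup H] [InnerProductSpace ℝ H]
    (m M ε₁ ε₂ D₁ D₂ : ℝ) (hm : 0 < m) (hM : 0 < M)
    (f g : H → ℝ) (f' g' : H → H)
    (hscf : ∀ x y : H, f x + (inner ℝ (f' x) (y - x) : ℝ) + (m / 2) * ‖y - x‖ ^ 2 ≤ f y)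
    (hscg : ∀ x y : H, g x + (inner ℝ (g' x) (y - x) : ℝ) + (m / 2) * ‖y - x‖ ^ 2 ≤ g y)
    (hlipf : ∀ x y : H, ‖f' x - f' y‖ ≤ M * ‖x - y‖)
    (hlipg : ∀ x y : H, ‖g' x - g' y‖ ≤ M * ‖x - y‖)
    (wf wg : H) (hminf : f' wf = 0) (hming : g' wg = 0)
    {Ω : Type*} [MeasurableSpace Ω] (P : Measure Ω) [IsProbabilityMeasure P]
    (U V GU GV : Ω → H)
    (hfU : Integrable (fun ω => f (U ω)) P)
    (hgV : Integrable (fun ω => g (V ω)) P)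
    (hdiffU : Integrable (fun ω => ‖f' (U ω) - GU ω‖) P)
    (hdiffV : Integrable (fun ω => ‖g' (V ω) - GV ω‖) P)
    (hexcessU : ∫ ω, f (U ω) ∂P - f wf ≤ ε₁)
    (hexcessV : ∫ ω, g (V ω) ∂P - g wg ≤ ε₂)
    (happroxU : ∫ ω, ‖f' (U ω) - GU ω‖ ∂P ≤ D₁)
    (happroxV : ∫ ω, ‖g' (V ω) - GV ω‖ ∂P ≤ D₂) :
    ∫ ω, (‖U ω - V ω‖ + (1 / m) * ‖GU ω‖ + (1 / m) * ‖GV ω‖) ∂P - ‖wf - wg‖ ≤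
      (2 * Real.sqrt 2 * M / m ^ ((3 : ℝ) / 2)) * (Real.sqrt ε₁ + Real.sqrt ε₂) +
        (1 / m) * (D₁ + D₂) := by
  obtain ⟨hintU, hU⟩ := overshootBound_integrable_and_integral_le hm hM.le hscf hminf hfU hdiffU
    hexcessU happroxU
  obtain ⟨hintV, hV⟩ := overshootBound_integrable_and_integral_le hm hM.le hscg hming hgV hdiffV
    hexcessV happroxV
  have hpointwise : ∀ ω, ‖U ω - V ω‖ + 1 / m * ‖GU ω‖ + 1 / m * ‖GV ω‖ ≤ ‖wf - wg‖ +
      overshootBound m M f f' wf (U ω) (GU ω) + overshootBound m M g g' wg (V ω) (GV ω) := by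
    intro ω
    have hU := norm_sub_add_norm_le_overshootBound hm hM.le hscf hlipf hminf (U ω) (GU ω)
    have hV := norm_sub_add_norm_le_overshootBound hm hM.le hscg hlipg hming (V ω) (GV ω)
    have htri₁ := norm_sub_le_norm_sub_add_norm_sub (U ω) wf (V ω)
    have htri₂ := norm_sub_le_norm_sub_add_norm_sub wf wg (V ω)
    rw [norm_sub_rev wg] at htri₂
    linarith
  have hmono := integral_mono_of_nonneg (ae_of_all _ fun ω => by positivity)
    (((integrable_const _).add hintU).add hintV) (ae_of_all _ hpointwise)
  rw [integral_add' ((integrable_const _).add hintU) hintV,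
    integral_add' (integrable_const _) hintU, integral_const, probReal_univ, one_smul] at hmono
  linarith

/-- Expected overshoot of the direct estimate
`‖U − V‖ + (1/m)‖G_U‖ + (1/m)‖G_V‖` above the true change `‖w_f* − w_g*‖` is bounded by
`(2√2·M/m^{3/2})(√ε₁ + √ε₂) + (1/m)(D₁ + D₂)`. -/
theorem expected_direct_estimate_overshoot
    {H : Type*} [NormedAddCommGroup H] [InnerProductSpace ℝ H] [CompleteSpace H]
    (m M ε₁ ε₂ D₁ D₂ : ℝ) (hm : 0 < m) (hM : 0 < M)
    (hε₁ : 0 ≤ ε₁) (hε₂ : 0 ≤ ε₂) (hD₁ : 0 ≤ D₁) (hD₂ : 0 ≤ D₂)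
    (f g : H → ℝ) (f' g' : H → H)
    (hgradf : ∀ x, HasGradientAt f (f' x) x)
    (hgradg : ∀ x, HasGradientAt g (g' x) x)
    (hscf : ∀ x y : H, f x + (inner ℝ (f' x) (y - x) : ℝ) + (m / 2) * ‖y - x‖ ^ 2 ≤ f y)
    (hscg : ∀ x y : H, g x + (inner ℝ (g' x) (y - x) : ℝ) + (m / 2) * ‖y - x‖ ^ 2 ≤ g y)
    (hlipf : ∀ x y : H, ‖f' x - f' y‖ ≤ M * ‖x - y‖)
    (hlipg : ∀ x y : H, ‖g' x - g' y‖ ≤ M * ‖x - y‖)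
    (wf wg : H) (hminf : f' wf = 0) (hming : g' wg = 0)
    {Ω : Type*} [MeasurableSpace Ω] (P : Measure Ω) [IsProbabilityMeasure P]
    (U V GU GV : Ω → H)
    (hfU : Integrable (fun ω => f (U ω)) P)
    (hgV : Integrable (fun ω => g (V ω)) P)
    (hUV : Integrable (fun ω => ‖U ω - V ω‖) P)
    (hGU : Integrable (fun ω => ‖GU ω‖) P)
    (hGV : Integrable (fun ω => ‖GV ω‖) P)
    (hgradU : Integrable (fun ω => ‖f' (U ω)‖) P)
    (hgradV : Integrable (fun ω => ‖g' (V ω)‖) P)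
    (hdiffU : Integrable (fun ω => ‖f' (U ω) - GU ω‖) P)
    (hdiffV : Integrable (fun ω => ‖g' (V ω) - GV ω‖) P)
    (hexcessU : ∫ ω, f (U ω) ∂P - f wf ≤ ε₁)
    (hexcessV : ∫ ω, g (V ω) ∂P - g wg ≤ ε₂)
    (happroxU : ∫ ω, ‖f' (U ω) - GU ω‖ ∂P ≤ D₁)
    (happroxV : ∫ ω, ‖g' (V ω) - GV ω‖ ∂P ≤ D₂) :
    ∫ ω, (‖U ω - V ω‖ + (1 / m) * ‖GU ω‖ + (1 / m) * ‖GV ω‖) ∂P - ‖wf - wg‖ ≤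
      (2 * Real.sqrt 2 * M / m ^ ((3 : ℝ) / 2)) * (Real.sqrt ε₁ + Real.sqrt ε₂) +
        (1 / m) * (D₁ + D₂) :=
  expected_direct_estimate_overshoot_general m M ε₁ ε₂ D₁ D₂ hm hM f g f' g' hscf hscg hlipf hlipg
    wf wg hminf hming P U V GU GV hfU hgV hdiffU hdiffV hexcessU hexcessV happroxU happroxV
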